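/- arXiv:2605.01752 — 4 statements merged into one kernel-verified Lean document; each statement's English description precedes it below -/
import Mathlib

section
/- Let T be a positive integer and let τ_1, …, τ_T be natural numbers (delays) satisfying the cumulative budget constraint Σ_{s=1}^T τ_s ≤ Λ for a real number Λ ≥ 0. For every round t ∈ {1, …, T}, the number of invisible feedbacks D_t := |{s ∈ ℕ : 1 ≤ s < t and s + τ_s > t}| satisfies D_t ≤ √(2Λ). -/
/-! The feedback of a pending round `s < t` satisfies `τ s ≥ t - s + 1`, and the gaps `t - s` of
distinct pending rounds are distinct naturals. With `D` pending rounds their delays therefore add up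
to at least `0 + 1 + ⋯ + D = D (D + 1) / 2 ≥ D² / 2`, while they add up to at most `Λ`. -/

open Finset

theorem Finset.sum_range_card_le_sum (A : Finset ℕ) : ∑ i ∈ range #A, i ≤ ∑ i ∈ A, i := by
  induction A using Finset.induction_on_max with
  | empty => simp
  | insert a A hlt ih =>
    have hcard : #A ≤ a := by
      simpa using card_le_card fun x hx => mem_range.2 (hlt x hx)
    rw [card_insert_of_notMem fun ha => (hlt a ha).false, sum_range_succ,
      sum_insert fun ha => (hlt a ha).false]
    omega

theorem card_mul_succ_le_two_mul_sum_of_le_of_lt_add {S : Finset ℕ} {t : ℕ} {τ : ℕ → ℕ}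
    (hS : ∀ s ∈ S, s ≤ t ∧ t < s + τ s) : #S * (#S + 1) ≤ 2 * ∑ s ∈ S, τ s := by
  have hinj : Set.InjOn (t - ·) S := fun a ha b hb hab => by
    have := hS a ha
    have := hS b hb
    simp only at hab
    omega
  calc #S * (#S + 1) = (∑ i ∈ range (#S + 1), i) * 2 := by
        rw [sum_range_id_mul_two, Nat.add_sub_cancel, mul_comm]
    _ = 2 * (∑ i ∈ range #(S.image (t - ·)), i + #S) := by
        rw [sum_range_succ, card_image_of_injOn hinj, mul_comm]
    _ ≤ 2 * (∑ i ∈ S.image (t - ·), i + #S) := by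
        gcongr 2 * (?_ + _)
        exact sum_range_card_le_sum _
    _ = 2 * ∑ s ∈ S, (t - s + 1) := by
        rw [sum_image hinj, sum_add_distrib, card_eq_sum_ones]
    _ ≤ 2 * ∑ s ∈ S, τ s := by
        gcongr with s hs
        have := hS s hs
        omega

theorem invisible_feedback_bound_general (T : ℕ) (τ : ℕ → ℕ) (Λ : ℝ)
    (hbudget : (∑ s ∈ Finset.Icc 1 T, (τ s : ℝ)) ≤ Λ)
    (t : ℕ) (ht : t ∈ Finset.Icc 1 T) :
    (((Finset.Ico 1 t).filter (fun s => t < s + τ s)).card : ℝ) ≤ Real.sqrt (2 * Λ) := by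
  set S := (Ico 1 t).filter (fun s => t < s + τ s)
  have hS : ∀ s ∈ S, s ≤ t ∧ t < s + τ s := fun s hs => by
    simp only [S, mem_filter, mem_Ico] at hs
    omega
  have hsub : S ⊆ Icc 1 T := fun s hs => by
    simp only [S, mem_filter, mem_Ico, mem_Icc] at hs ht ⊢
    omega
  have hpending : ∑ s ∈ S, (τ s : ℝ) ≤ Λ :=
    (sum_le_sum_of_subset_of_nonneg hsub fun _ _ _ => by positivity).trans hbudget
  have hcount : ((#S * (#S + 1) : ℕ) : ℝ) ≤ ((2 * ∑ s ∈ S, τ s : ℕ) : ℝ) := by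
    exact_mod_cast card_mul_succ_le_two_mul_sum_of_le_of_lt_add hS
  push_cast at hcount
  exact Real.le_sqrt_of_sq_le (by nlinarith)

/-- **Bound on invisible feedbacks under an adversarial delay budget.**
If the delays `τ 1, …, τ T` satisfy the cumulative budget `∑ τ s ≤ Λ`, then at every
round `t ∈ {1, …, T}` the number of pending (invisible) feedbacks
`D_t = |{s : 1 ≤ s < t, s + τ s > t}|` is at most `√(2Λ)`. -/
theorem invisible_feedback_bound (T : ℕ) (hT : 0 < T) (τ : ℕ → ℕ) (Λ : ℝ) (hΛ : 0 ≤ Λ)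
    (hbudget : (∑ s ∈ Finset.Icc 1 T, (τ s : ℝ)) ≤ Λ)
    (t : ℕ) (ht : t ∈ Finset.Icc 1 T) :
    (((Finset.Ico 1 t).filter (fun s => t < s + τ s)).card : ℝ) ≤ Real.sqrt (2 * Λ) :=
  invisible_feedback_bound_general T τ Λ hbudget t ht
end

section
/- Let λ > 0, κ > 0, α > 0, and let z_1, …, z_n ∈ ℝ^d. Recursively define V_0 = λ I_d, ω_s = min(1, α / ‖z_s‖_{V_{s−1}⁻¹}) (with ω_s := 1 when z_s = 0), and V_s = V_{s−1} + κ ω_s z_s z_sᵀ for s = 1, …, n. Then for every subset P ⊆ {1, …, n} and every choice of real coefficients b_s with |b_s| ≤ 1 for all s ∈ P, the weighted sum satisfies ‖ Σ_{s∈P} ω_s b_s z_s ‖_{V_n⁻¹} ≤ α · |P|. -/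
open Matrix

/-- The matrix-weighted (semi)norm `‖x‖_A = √(xᵀ A x)`. -/
noncomputable def mnorm {d : ℕ} (A : Matrix (Fin d) (Fin d) ℝ) (x : Fin d → ℝ) : ℝ :=
  Real.sqrt (x ⬝ᵥ A.mulVec x)

/-- The weighted design matrices `V_0 = λ I`, `V_s = V_{s−1} + κ ω_s z_s z_sᵀ`,
where `ω_s = min(1, α/‖z_s‖_{V_{s−1}⁻¹})` (and `ω_s = 1` when `z_s = 0`). -/
noncomputable def designV (d : ℕ) (lam κ α : ℝ) (z : ℕ → Fin d → ℝ) :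
    ℕ → Matrix (Fin d) (Fin d) ℝ
  | 0 => lam • (1 : Matrix (Fin d) (Fin d) ℝ)
  | s + 1 =>
      designV d lam κ α z s +
        (κ * (if z (s + 1) = 0 then (1 : ℝ)
              else min 1 (α / mnorm ((designV d lam κ α z s)⁻¹) (z (s + 1))))) •
          Matrix.vecMulVec (z (s + 1)) (z (s + 1))

/-- The adaptive clipping weight `ω_s = min(1, α/‖z_s‖_{V_{s−1}⁻¹})`
(with `ω_s = 1` when `z_s = 0`). -/
noncomputable def clipWeight (d : ℕ) (lam κ α : ℝ) (z : ℕ → Fin d → ℝ) (s : ℕ) : ℝ :=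
  if z s = 0 then 1 else min 1 (α / mnorm ((designV d lam κ α z (s - 1))⁻¹) (z s))

lemma vecMulVec_mulVec' {d : ℕ} (w v x : Fin d → ℝ) :
    (vecMulVec w v) *ᵥ x = (v ⬝ᵥ x) • w := by
  ext i
  simp only [Matrix.mulVec, dotProduct, vecMulVec_apply, Pi.smul_apply, smul_eq_mul]
  rw [Finset.sum_mul]
  exact Finset.sum_congr rfl fun j _ => by ring

lemma qf_vecMulVec {d : ℕ} (v x : Fin d → ℝ) :
    x ⬝ᵥ (vecMulVec v v) *ᵥ x = (v ⬝ᵥ x) ^ 2 := by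
  rw [vecMulVec_mulVec', dotProduct_smul, smul_eq_mul, dotProduct_comm, sq]

lemma psd_smul_vecMulVec {d : ℕ} {c : ℝ} (hc : 0 ≤ c) (v : Fin d → ℝ) :
    (c • vecMulVec v v).PosSemidef := by
  refine Matrix.PosSemidef.of_dotProduct_mulVec_nonneg ?_ ?_
  · ext i j
    simp [conjTranspose_apply, vecMulVec_apply, mul_comm]
  · intro x
    simp only [star_trivial, Matrix.smul_mulVec, dotProduct_smul, smul_eq_mul,
      qf_vecMulVec]
    positivity

lemma posDef_smul_one {d : ℕ} {lam : ℝ} (hlam : 0 < lam) :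
    (lam • (1 : Matrix (Fin d) (Fin d) ℝ)).PosDef := by
  refine Matrix.PosDef.of_dotProduct_mulVec_pos ?_ ?_
  · simp [Matrix.IsHermitian]
  · intro x hx
    simp only [star_trivial, Matrix.smul_mulVec, dotProduct_smul, Matrix.one_mulVec,
      smul_eq_mul]
    have : 0 < x ⬝ᵥ x := by
      obtain ⟨i, hi⟩ := Function.ne_iff.mp hx
      have : 0 < ∑ j, x j * x j :=
        Finset.sum_pos' (fun j _ => mul_self_nonneg _)
          ⟨i, Finset.mem_univ i, mul_self_pos.mpr hi⟩
      simpa [dotProduct]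
    positivity

lemma qf_symm {d : ℕ} {A : Matrix (Fin d) (Fin d) ℝ} (hA : A.IsHermitian) (u v : Fin d → ℝ) :
    u ⬝ᵥ A *ᵥ v = v ⬝ᵥ A *ᵥ u := by
  have hAt : Aᵀ = A := by
    rw [← conjTranspose_eq_transpose_of_trivial]; exact hA
  rw [dotProduct_mulVec, ← Matrix.mulVec_transpose, hAt, dotProduct_comm]

lemma cs_psd {d : ℕ} {A : Matrix (Fin d) (Fin d) ℝ} (hA : A.PosSemidef) (u v : Fin d → ℝ) :
    u ⬝ᵥ A *ᵥ v ≤ Real.sqrt (u ⬝ᵥ A *ᵥ u) * Real.sqrt (v ⬝ᵥ A *ᵥ v) := by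
  have hqu : 0 ≤ u ⬝ᵥ A *ᵥ u := by simpa using hA.dotProduct_mulVec_nonneg u
  have hqv : 0 ≤ v ⬝ᵥ A *ᵥ v := by simpa using hA.dotProduct_mulVec_nonneg v
  have hd : discrim (v ⬝ᵥ A *ᵥ v) (2 * (u ⬝ᵥ A *ᵥ v)) (u ⬝ᵥ A *ᵥ u) ≤ 0 := by
    apply discrim_le_zero
    intro t
    have h0 : 0 ≤ (u + t • v) ⬝ᵥ A *ᵥ (u + t • v) := by simpa using hA.dotProduct_mulVec_nonneg (u + t • v)
    have hexp : (u + t • v) ⬝ᵥ A *ᵥ (u + t • v)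
        = (v ⬝ᵥ A *ᵥ v) * (t * t) + 2 * (u ⬝ᵥ A *ᵥ v) * t + u ⬝ᵥ A *ᵥ u := by
      have hsy := qf_symm hA.1 v u
      simp only [Matrix.mulVec_add, Matrix.mulVec_smul, dotProduct_add, add_dotProduct,
        dotProduct_smul, smul_dotProduct, smul_eq_mul]
      rw [hsy]; ring
    rw [← hexp]; exact h0
  have hsq : (u ⬝ᵥ A *ᵥ v) ^ 2 ≤ (u ⬝ᵥ A *ᵥ u) * (v ⬝ᵥ A *ᵥ v) := by
    unfold discrim at hd; nlinarith [hd]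
  calc u ⬝ᵥ A *ᵥ v ≤ |u ⬝ᵥ A *ᵥ v| := le_abs_self _
    _ = Real.sqrt ((u ⬝ᵥ A *ᵥ v) ^ 2) := (Real.sqrt_sq_eq_abs _).symm
    _ ≤ Real.sqrt ((u ⬝ᵥ A *ᵥ u) * (v ⬝ᵥ A *ᵥ v)) := Real.sqrt_le_sqrt hsq
    _ = _ := Real.sqrt_mul hqu _

lemma qf_inv_anti {d : ℕ} {A B : Matrix (Fin d) (Fin d) ℝ}
    (hA : A.PosDef) (hB : B.PosDef) (h : ∀ y, y ⬝ᵥ A *ᵥ y ≤ y ⬝ᵥ B *ᵥ y) (x : Fin d → ℝ) :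
    x ⬝ᵥ B⁻¹ *ᵥ x ≤ x ⬝ᵥ A⁻¹ *ᵥ x := by
  have hAdet : IsUnit A.det := hA.det_pos.ne'.isUnit
  have hBdet : IsUnit B.det := hB.det_pos.ne'.isUnit
  set y := B⁻¹ *ᵥ x with hy
  have hBy : B *ᵥ y = x := by
    rw [hy, Matrix.mulVec_mulVec, Matrix.mul_nonsing_inv _ hBdet, Matrix.one_mulVec]
  have hAx : A *ᵥ (A⁻¹ *ᵥ x) = x := by
    rw [Matrix.mulVec_mulVec, Matrix.mul_nonsing_inv _ hAdet, Matrix.one_mulVec]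
  have key : x ⬝ᵥ y = (A⁻¹ *ᵥ x) ⬝ᵥ A *ᵥ y := by
    rw [qf_symm hA.1, hAx, dotProduct_comm]
  have hq1 : (A⁻¹ *ᵥ x) ⬝ᵥ A *ᵥ (A⁻¹ *ᵥ x) = x ⬝ᵥ A⁻¹ *ᵥ x := by
    rw [hAx, dotProduct_comm]
  have hq2 : y ⬝ᵥ B *ᵥ y = x ⬝ᵥ y := by rw [hBy, dotProduct_comm]
  have ha : 0 ≤ x ⬝ᵥ y := by
    have := hB.inv.posSemidef.dotProduct_mulVec_nonneg x; simpa [hy] using this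
  have hc : 0 ≤ x ⬝ᵥ A⁻¹ *ᵥ x := by simpa using hA.inv.posSemidef.dotProduct_mulVec_nonneg x
  have step : x ⬝ᵥ y ≤ Real.sqrt (x ⬝ᵥ A⁻¹ *ᵥ x) * Real.sqrt (x ⬝ᵥ y) := by
    calc x ⬝ᵥ y = (A⁻¹ *ᵥ x) ⬝ᵥ A *ᵥ y := key
      _ ≤ Real.sqrt ((A⁻¹ *ᵥ x) ⬝ᵥ A *ᵥ (A⁻¹ *ᵥ x)) * Real.sqrt (y ⬝ᵥ A *ᵥ y) :=
          cs_psd hA.posSemidef _ _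
      _ ≤ Real.sqrt (x ⬝ᵥ A⁻¹ *ᵥ x) * Real.sqrt (x ⬝ᵥ y) := by
          rw [hq1]
          exact mul_le_mul_of_nonneg_left
            (Real.sqrt_le_sqrt (by rw [← hq2]; exact h y)) (Real.sqrt_nonneg _)
  show x ⬝ᵥ y ≤ x ⬝ᵥ A⁻¹ *ᵥ x
  nlinarith [Real.sq_sqrt ha, Real.sq_sqrt hc, Real.sqrt_nonneg (x ⬝ᵥ y),
    Real.sqrt_nonneg (x ⬝ᵥ A⁻¹ *ᵥ x), sq_nonneg (Real.sqrt (x ⬝ᵥ y) - Real.sqrt (x ⬝ᵥ A⁻¹ *ᵥ x))]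

lemma weight_nonneg {d : ℕ} {κ α : ℝ} (hκ : 0 < κ) (hα : 0 < α) (m : ℝ) (v : Fin d → ℝ) :
    0 ≤ κ * (if v = 0 then (1 : ℝ) else min 1 (α / m)) ∨ True := Or.inr trivial

lemma designV_posDef (d : ℕ) (lam κ α : ℝ) (hlam : 0 < lam) (hκ : 0 < κ) (hα : 0 < α)
    (z : ℕ → Fin d → ℝ) : ∀ s, (designV d lam κ α z s).PosDef := by
  intro s
  induction s with
  | zero => exact posDef_smul_one hlam
  | succ s ih =>
      rw [designV]
      refine ih.add_posSemidef (psd_smul_vecMulVec ?_ _)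
      have : (0:ℝ) ≤ if z (s + 1) = 0 then (1 : ℝ)
          else min 1 (α / mnorm ((designV d lam κ α z s)⁻¹) (z (s + 1))) := by
        split
        · norm_num
        · exact le_min (by norm_num)
            (div_nonneg hα.le (Real.sqrt_nonneg _))
      positivity

lemma designV_qf_mono (d : ℕ) (lam κ α : ℝ) (hκ : 0 < κ) (hα : 0 < α)
    (z : ℕ → Fin d → ℝ) {s t : ℕ} (hst : s ≤ t) (x : Fin d → ℝ) :
    x ⬝ᵥ (designV d lam κ α z s) *ᵥ x ≤ x ⬝ᵥ (designV d lam κ α z t) *ᵥ x := by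
  induction t, hst using Nat.le_induction with
  | base => exact le_refl _
  | succ t hst ih =>
      refine le_trans ih ?_
      rw [designV, Matrix.add_mulVec, dotProduct_add]
      have hc : (0:ℝ) ≤ κ * (if z (t + 1) = 0 then (1 : ℝ)
          else min 1 (α / mnorm ((designV d lam κ α z t)⁻¹) (z (t + 1)))) := by
        have : (0:ℝ) ≤ if z (t + 1) = 0 then (1 : ℝ)
            else min 1 (α / mnorm ((designV d lam κ α z t)⁻¹) (z (t + 1))) := by
          split
          · norm_num
          · exact le_min (by norm_num) (div_nonneg hα.le (Real.sqrt_nonneg _))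
        positivity
      have := (psd_smul_vecMulVec hc (z (t + 1))).dotProduct_mulVec_nonneg x
      simp only [star_trivial] at this
      linarith

lemma mnorm_zero {d : ℕ} (A : Matrix (Fin d) (Fin d) ℝ) : mnorm A 0 = 0 := by
  simp [mnorm]

lemma mnorm_smul {d : ℕ} (A : Matrix (Fin d) (Fin d) ℝ) (c : ℝ) (x : Fin d → ℝ) :
    mnorm A (c • x) = |c| * mnorm A x := by
  rw [mnorm, mnorm, Matrix.mulVec_smul, dotProduct_smul, smul_dotProduct, smul_eq_mul,
    smul_eq_mul, ← mul_assoc, ← sq, Real.sqrt_mul (sq_nonneg c), Real.sqrt_sq_eq_abs]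

lemma mnorm_add_le {d : ℕ} {A : Matrix (Fin d) (Fin d) ℝ} (hA : A.PosSemidef)
    (x y : Fin d → ℝ) : mnorm A (x + y) ≤ mnorm A x + mnorm A y := by
  have hqx : 0 ≤ x ⬝ᵥ A *ᵥ x := by simpa using hA.dotProduct_mulVec_nonneg x
  have hqy : 0 ≤ y ⬝ᵥ A *ᵥ y := by simpa using hA.dotProduct_mulVec_nonneg y
  have hcs := cs_psd hA x y
  have hsy := qf_symm hA.1 y x
  have hexp : (x + y) ⬝ᵥ A *ᵥ (x + y)
      = x ⬝ᵥ A *ᵥ x + 2 * (x ⬝ᵥ A *ᵥ y) + y ⬝ᵥ A *ᵥ y := by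
    simp only [Matrix.mulVec_add, dotProduct_add, add_dotProduct]
    rw [hsy]; ring
  rw [mnorm, mnorm, mnorm, hexp]
  have hbound : x ⬝ᵥ A *ᵥ x + 2 * (x ⬝ᵥ A *ᵥ y) + y ⬝ᵥ A *ᵥ y
      ≤ (Real.sqrt (x ⬝ᵥ A *ᵥ x) + Real.sqrt (y ⬝ᵥ A *ᵥ y)) ^ 2 := by
    have h1 := Real.sq_sqrt hqx
    have h2 := Real.sq_sqrt hqy
    nlinarith [hcs]
  calc Real.sqrt (x ⬝ᵥ A *ᵥ x + 2 * (x ⬝ᵥ A *ᵥ y) + y ⬝ᵥ A *ᵥ y)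
      ≤ Real.sqrt ((Real.sqrt (x ⬝ᵥ A *ᵥ x) + Real.sqrt (y ⬝ᵥ A *ᵥ y)) ^ 2) :=
        Real.sqrt_le_sqrt hbound
    _ = _ := Real.sqrt_sq (by positivity)

lemma mnorm_nonneg {d : ℕ} (A : Matrix (Fin d) (Fin d) ℝ) (x : Fin d → ℝ) :
    0 ≤ mnorm A x := Real.sqrt_nonneg _

lemma mnorm_sum_le {d : ℕ} {A : Matrix (Fin d) (Fin d) ℝ} (hA : A.PosSemidef)
    (P : Finset ℕ) (f : ℕ → Fin d → ℝ) :
    mnorm A (∑ s ∈ P, f s) ≤ ∑ s ∈ P, mnorm A (f s) := by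
  classical
  induction P using Finset.induction_on with
  | empty => simp [mnorm_zero]
  | insert _ _ hni ih =>
      rw [Finset.sum_insert hni, Finset.sum_insert hni]
      exact le_trans (mnorm_add_le hA _ _) (by linarith)

/-- **Pending-feedback bias bound.** For any subset `P ⊆ {1, …, n}` of rounds and
coefficients `b_s` with `|b_s| ≤ 1` on `P`,
`‖∑_{s∈P} ω_s b_s z_s‖_{V_n⁻¹} ≤ α |P|`. -/
theorem pending_bias_bound (d : ℕ) (lam κ α : ℝ)
    (hlam : 0 < lam) (hκ : 0 < κ) (hα : 0 < α)
    (z : ℕ → Fin d → ℝ) (n : ℕ) (P : Finset ℕ) (hP : P ⊆ Finset.Icc 1 n)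
    (b : ℕ → ℝ) (hb : ∀ s ∈ P, |b s| ≤ 1) :
    mnorm ((designV d lam κ α z n)⁻¹)
        (∑ s ∈ P, (clipWeight d lam κ α z s * b s) • z s)
      ≤ α * P.card := by
  have hVn := designV_posDef d lam κ α hlam hκ hα z n
  have hW : ((designV d lam κ α z n)⁻¹).PosDef := hVn.inv
  calc mnorm ((designV d lam κ α z n)⁻¹)
        (∑ s ∈ P, (clipWeight d lam κ α z s * b s) • z s)
      ≤ ∑ s ∈ P, mnorm ((designV d lam κ α z n)⁻¹)
          ((clipWeight d lam κ α z s * b s) • z s) := mnorm_sum_le hW.posSemidef _ _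
    _ ≤ ∑ s ∈ P, α := by
        refine Finset.sum_le_sum fun s hs => ?_
        rw [mnorm_smul]
        by_cases hz : z s = 0
        · rw [hz, mnorm_zero, mul_zero]
          exact hα.le
        · have hs1 : 1 ≤ s := (Finset.mem_Icc.mp (hP hs)).1
          have hsn : s ≤ n := (Finset.mem_Icc.mp (hP hs)).2
          have hVs := designV_posDef d lam κ α hlam hκ hα z (s - 1)
          set m := mnorm ((designV d lam κ α z (s - 1))⁻¹) (z s) with hm
          have hmpos : 0 < m := by
            rw [hm, mnorm]
            exact Real.sqrt_pos.mpr (by simpa using hVs.inv.dotProduct_mulVec_pos hz)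
          have hle : mnorm ((designV d lam κ α z n)⁻¹) (z s) ≤ m := by
            rw [mnorm, hm, mnorm]
            apply Real.sqrt_le_sqrt
            exact qf_inv_anti hVs hVn
              (fun y => designV_qf_mono d lam κ α hκ hα z (Nat.sub_le s 1 |>.trans hsn) y)
              (z s)
          have hω : clipWeight d lam κ α z s = min 1 (α / m) := by
            rw [clipWeight, if_neg hz]
          have hωnonneg : 0 ≤ clipWeight d lam κ α z s := by
            rw [hω]
            exact le_min (by norm_num) (div_nonneg hα.le hmpos.le)
          have hωle : clipWeight d lam κ α z s ≤ α / m := by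
            rw [hω]; exact min_le_right _ _
          have habs : |clipWeight d lam κ α z s * b s| ≤ α / m := by
            rw [abs_mul, abs_of_nonneg hωnonneg]
            calc clipWeight d lam κ α z s * |b s| ≤ clipWeight d lam κ α z s * 1 :=
                  mul_le_mul_of_nonneg_left (hb s hs) hωnonneg
              _ = clipWeight d lam κ α z s := mul_one _
              _ ≤ α / m := hωle
          calc |clipWeight d lam κ α z s * b s| * mnorm ((designV d lam κ α z n)⁻¹) (z s)
              ≤ (α / m) * m :=
                mul_le_mul habs hle (mnorm_nonneg _ _) (div_nonneg hα.le hmpos.le)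
            _ = α := div_mul_cancel₀ α hmpos.ne'
    _ = α * P.card := by rw [Finset.sum_const, nsmul_eq_mul, mul_comm]
end

section
/- Let z_1, …, z_K ∈ ℝ^d, let θ ∈ ℝ^d, let V be a symmetric positive definite d×d real matrix, and let c ≥ 0. Suppose a ∈ {1, …, K} maximizes k ↦ ⟨θ, z_k⟩ and b ∈ {1, …, K} maximizes k ↦ ⟨θ, z_k⟩ + c‖z_k − z_a‖_{V⁻¹}. Then for every k ∈ {1, …, K}, ⟨θ, (z_k − z_a) + (z_k − z_b)⟩ ≤ c ( ‖z_b − z_a‖_{V⁻¹} − ‖z_k − z_a‖_{V⁻¹} ). -/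
open Matrix

/-- **Arm-selection lemma for the UCB-style dueling strategy.**
If `a` maximizes `k ↦ ⟨θ, z_k⟩` and `b` maximizes
`k ↦ ⟨θ, z_k⟩ + c‖z_k − z_a‖_{V⁻¹}`, then for every `k`,
`⟨θ, (z_k − z_a) + (z_k − z_b)⟩ ≤ c(‖z_b − z_a‖_{V⁻¹} − ‖z_k − z_a‖_{V⁻¹})`. -/
theorem arm_selection_bound (d K : ℕ) (z : Fin K → Fin d → ℝ) (θ : Fin d → ℝ)
    (V : Matrix (Fin d) (Fin d) ℝ) (hV : V.PosDef) (c : ℝ) (hc : 0 ≤ c)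
    (a b : Fin K)
    (ha : ∀ k, θ ⬝ᵥ z k ≤ θ ⬝ᵥ z a)
    (hb : ∀ k, θ ⬝ᵥ z k + c * mnorm V⁻¹ (z k - z a)
            ≤ θ ⬝ᵥ z b + c * mnorm V⁻¹ (z b - z a)) :
    ∀ k, θ ⬝ᵥ ((z k - z a) + (z k - z b))
        ≤ c * (mnorm V⁻¹ (z b - z a) - mnorm V⁻¹ (z k - z a)) := by
  intro k
  have h1 := ha k
  have h2 := hb k
  simp only [dotProduct_add, dotProduct_sub] at *
  nlinarith [h1, h2]
end

section
/- Let z_1, …, z_K ∈ ℝ^d, let θ, θ_* ∈ ℝ^d, let V be a symmetric positive definite d×d real matrix, and let β ≥ 0 with ‖θ_* − θ‖_V ≤ β. Suppose a ∈ {1, …, K} maximizes k ↦ ⟨θ, z_k⟩ and b ∈ {1, …, K} maximizes k ↦ ⟨θ, z_k⟩ + 2β‖z_k − z_a‖_{V⁻¹}. Then for every k ∈ {1, …, K}, ⟨θ_*, (z_k − z_a) + (z_k − z_b)⟩ ≤ 3β ‖z_a − z_b‖_{V⁻¹}. -/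
/-!
Write `θ_* = θ + w` with `⟨w, u⟩ ≤ ‖w‖_V ‖u‖_{V⁻¹} ≤ β ‖u‖_{V⁻¹}`. Splitting
`(z_k − z_a) + (z_k − z_b) = 2(z_k − z_a) + (z_a − z_b)`, the `w`-part is at most
`2β‖z_k − z_a‖_{V⁻¹} + β‖z_a − z_b‖_{V⁻¹}`, while the `θ`-part
`(⟨θ, z_k⟩ − ⟨θ, z_a⟩) + (⟨θ, z_k⟩ − ⟨θ, z_b⟩)` is at most
`0 + 2β‖z_a − z_b‖_{V⁻¹} − 2β‖z_k − z_a‖_{V⁻¹}` by the choice of `a` and `b`.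
-/

open Matrix

lemma mnorm_sub_comm {d : ℕ} (A : Matrix (Fin d) (Fin d) ℝ) (x y : Fin d → ℝ) :
    mnorm A (x - y) = mnorm A (y - x) := by
  rw [mnorm, mnorm, ← neg_sub, mulVec_neg, dotProduct_neg, neg_dotProduct, neg_neg]

lemma dotProduct_mulVec_le_mnorm_mul_mnorm {d : ℕ} {A : Matrix (Fin d) (Fin d) ℝ}
    (hA : A.PosSemidef) (x y : Fin d → ℝ) : x ⬝ᵥ A *ᵥ y ≤ mnorm A x * mnorm A y := by
  let _ := A.toSeminormedAddCommGroup hA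
  let _ := A.toInnerProductSpace hA
  have hinner (u v : Fin d → ℝ) : inner ℝ u v = u ⬝ᵥ A *ᵥ v := by
    change (A *ᵥ v) ⬝ᵥ star u = _
    rw [star_trivial, dotProduct_comm]
  have hcs := real_inner_mul_inner_self_le x y
  have hx := real_inner_self_nonneg (x := x)
  simp only [hinner] at hcs hx
  calc x ⬝ᵥ A *ᵥ y ≤ |x ⬝ᵥ A *ᵥ y| := le_abs_self _
    _ ≤ Real.sqrt ((x ⬝ᵥ A *ᵥ x) * (y ⬝ᵥ A *ᵥ y)) := Real.abs_le_sqrt (by rwa [sq])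
    _ = mnorm A x * mnorm A y := Real.sqrt_mul hx _

lemma dotProduct_le_mnorm_mul_mnorm_inv {d : ℕ} {V : Matrix (Fin d) (Fin d) ℝ} (hV : V.PosDef)
    (w u : Fin d → ℝ) : w ⬝ᵥ u ≤ mnorm V w * mnorm V⁻¹ u := by
  have hVinv : V *ᵥ (V⁻¹ *ᵥ u) = u := by
    rw [mulVec_mulVec, mul_nonsing_inv _ ((isUnit_iff_isUnit_det V).mp hV.isUnit), one_mulVec]
  have hdual : mnorm V (V⁻¹ *ᵥ u) = mnorm V⁻¹ u := by
    rw [mnorm, mnorm, hVinv, dotProduct_comm]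
  simpa only [hVinv, hdual] using dotProduct_mulVec_le_mnorm_mul_mnorm hV.posSemidef w (V⁻¹ *ᵥ u)

theorem instantaneous_regret_bound_general (d K : ℕ) (z : Fin K → Fin d → ℝ)
    (θ θstar : Fin d → ℝ) (V : Matrix (Fin d) (Fin d) ℝ) (hV : V.PosDef)
    (β : ℝ) (hconf : mnorm V (θstar - θ) ≤ β)
    (a b : Fin K)
    (ha : ∀ k, θ ⬝ᵥ z k ≤ θ ⬝ᵥ z a)
    (hb : ∀ k, θ ⬝ᵥ z k + 2 * β * mnorm V⁻¹ (z k - z a)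
            ≤ θ ⬝ᵥ z b + 2 * β * mnorm V⁻¹ (z b - z a)) :
    ∀ k, θstar ⬝ᵥ ((z k - z a) + (z k - z b))
        ≤ 3 * β * mnorm V⁻¹ (z a - z b) := by
  intro k
  have hwidth (u : Fin d → ℝ) : (θstar - θ) ⬝ᵥ u ≤ β * mnorm V⁻¹ u :=
    (dotProduct_le_mnorm_mul_mnorm_inv hV _ u).trans
      (mul_le_mul_of_nonneg_right hconf (mnorm_nonneg _ _))
  have hsplit : θstar ⬝ᵥ ((z k - z a) + (z k - z b))
      = 2 * ((θstar - θ) ⬝ᵥ (z k - z a)) + (θstar - θ) ⬝ᵥ (z a - z b)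
        + (θ ⬝ᵥ z k - θ ⬝ᵥ z a) + (θ ⬝ᵥ z k - θ ⬝ᵥ z b) := by
    simp only [sub_dotProduct, dotProduct_add, dotProduct_sub]
    ring
  have hbk := hb k
  rw [mnorm_sub_comm V⁻¹ (z b)] at hbk
  rw [hsplit]
  linarith [hwidth (z k - z a), hwidth (z a - z b), ha k]

/-- **Instantaneous dueling regret bound.**
If `‖θ_* − θ‖_V ≤ β`, `a` maximizes `k ↦ ⟨θ, z_k⟩` and `b` maximizes
`k ↦ ⟨θ, z_k⟩ + 2β‖z_k − z_a‖_{V⁻¹}`, then for every `k`,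
`⟨θ_*, (z_k − z_a) + (z_k − z_b)⟩ ≤ 3β ‖z_a − z_b‖_{V⁻¹}`. -/
theorem instantaneous_regret_bound (d K : ℕ) (z : Fin K → Fin d → ℝ)
    (θ θstar : Fin d → ℝ) (V : Matrix (Fin d) (Fin d) ℝ) (hV : V.PosDef)
    (β : ℝ) (hβ : 0 ≤ β) (hconf : mnorm V (θstar - θ) ≤ β)
    (a b : Fin K)
    (ha : ∀ k, θ ⬝ᵥ z k ≤ θ ⬝ᵥ z a)
    (hb : ∀ k, θ ⬝ᵥ z k + 2 * β * mnorm V⁻¹ (z k - z a)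
            ≤ θ ⬝ᵥ z b + 2 * β * mnorm V⁻¹ (z b - z a)) :
    ∀ k, θstar ⬝ᵥ ((z k - z a) + (z k - z b))
        ≤ 3 * β * mnorm V⁻¹ (z a - z b) :=
  instantaneous_regret_bound_general d K z θ θstar V hV β hconf a b ha hb
end
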